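/- Assume the matrix A = (Q i t)_{t∈T, i∈I} is totally unimodular with rank |T|, and let G ∈ ℝ with G > 2·|T|. Consider the weighted linear program max {Σ_{i∈I} (1 + G·Σ_{t∈T} p i t · Q i t)·δ i | δ ∈ P} and its dual min {Σ_{i∈I} δ̄ᵢ·γ i | Σ_{t∈T} Q i t · π t + γ i − λ i = 1 + G·Σ_{t∈T} p i t · Q i t for all i ∈ I, γ ≥ 0, λ ≥ 0}. If δ* is a primal optimal extreme point and (π*, γ*, λ*) is a dual optimal extreme point of this weighted program, then the rounded prices π̄ defined by π̄ t = ⌊π* t / G + 1/2⌋ for every t ∈ T satisfy the price conditions together with δ*: for every i ∈ I, (δ*ᵢ > 0 → Σ_{t∈T} (p i t − π̄ t)·Q i t ≥ 0) and (δ*ᵢ < δ̄ᵢ → Σ_{t∈T} (p i t − π̄ t)·Q i t ≤ 0). -/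

import Mathlib

/-!
By LP duality (Farkas' lemma), complementary slackness ties the price conditions for `δ*`
to the dual constraints that are tight at `(π*, γ*, λ*)`. Since `(π*, γ*, λ*)` is an extreme
point, the orders `i` with `γ*ᵢ = λ*ᵢ = 0` contain a basis `B` of columns of `A`, and `B` is
unimodular. So `π* = B⁻ᵀ(1 + G v_B) = m + G w` with integer vectors `m = B⁻ᵀ1`,
`w = B⁻ᵀv_B`, where `vᵢ = ∑ₜ pᵢₜ Qᵢₜ`. Total unimodularity of `[A | 1]` bounds the entries
of `B⁻¹[A | 1]` by one, so `|mₜ| ≤ |T|` and `|m ⬝ Aᵢ| ≤ |T|`. As `G > 2|T|`, rounding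
`π*/G` recovers `w`, and comparing the integers `w ⬝ Aᵢ` and `vᵢ` through
`Aᵢ ⬝ π* = m ⬝ Aᵢ + G (w ⬝ Aᵢ)` turns each tight dual inequality into the corresponding
price condition.
-/

def IsTotallyUnimodularMat {m n : Type*} [Fintype m] [Fintype n]
    (A : Matrix m n ℤ) : Prop :=
  ∀ (k : ℕ) (f : Fin k → m) (g : Fin k → n),
    Function.Injective f → Function.Injective g →
      (A.submatrix f g).det = 0 ∨ (A.submatrix f g).det = 1 ∨ (A.submatrix f g).det = -1

open Set Function Matrix Filter Topology

theorem eventually_forall_mul_le {ι : Type*} [Finite ι] {a b : ι → ℝ}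
    (h : ∀ i, 0 < a i ∨ (b i ≤ 0 ∧ 0 ≤ a i)) : ∀ᶠ ε in 𝓝[>] 0, ∀ i, ε * b i ≤ a i := by
  refine eventually_all.mpr fun i ↦ ?_
  rcases h i with ha | ⟨hb, ha⟩
  · have : Tendsto (fun ε ↦ ε * b i) (𝓝[>] 0) (𝓝 0) :=
      ((continuous_id.mul continuous_const).tendsto' 0 0 (zero_mul _)).mono_left
        nhdsWithin_le_nhds
    exact (this.eventually (gt_mem_nhds ha)).mono fun _ ↦ le_of_lt
  · filter_upwards [self_mem_nhdsWithin] with ε hε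
    exact (mul_nonpos_of_nonneg_of_nonpos (le_of_lt hε) hb).trans ha

theorem eq_zero_of_mem_extremePoints_of_add_mem_of_sub_mem {E : Type*} [AddCommGroup E]
    [Module ℝ E] {A : Set E} {x v : E} (hx : x ∈ A.extremePoints ℝ) (hadd : x + v ∈ A)
    (hsub : x - v ∈ A) : v = 0 := by
  have hseg : x ∈ openSegment ℝ (x + v) (x - v) :=
    ⟨1 / 2, 1 / 2, by norm_num, by norm_num, by norm_num, by module⟩
  simpa using hx.2 hadd hsub hseg

theorem LinearMap.apply_eq_dotProduct_apply_single {ι R : Type*} [Fintype ι] [DecidableEq ι]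
    [CommSemiring R] (f : (ι → R) →ₗ[R] R) (x : ι → R) :
    f x = x ⬝ᵥ fun i ↦ f (Pi.single i 1) := by
  have h := LinearMap.congr_fun ((LinearEquiv.piRing R R ι R).symm_apply_apply f) x
  simp only [LinearEquiv.piRing_symm_apply, LinearEquiv.piRing_apply, smul_eq_mul] at h
  exact h.symm

section ConicalCombinations

variable {𝕜 E : Type*} [Field 𝕜] [LinearOrder 𝕜] [IsStrictOrderedRing 𝕜] [AddCommGroup E]
  [Module 𝕜 E] {κ : Type*} [Fintype κ]

theorem linearCombination_image_Ici_eq_iUnion [DecidableEq κ] {w : κ → E}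
    (hw : ¬ LinearIndependent 𝕜 w) :
    Fintype.linearCombination 𝕜 w '' Ici 0 =
      ⋃ k, Fintype.linearCombination 𝕜 (fun j : {j // j ≠ k} ↦ w j.1) '' Ici 0 := by
  refine Subset.antisymm ?_ (iUnion_subset fun k ↦ ?_)
  · rintro _ ⟨τ, hτ, rfl⟩
    obtain ⟨g, hg, hpos⟩ : ∃ g : κ → 𝕜, ∑ j, g j • w j = 0 ∧ ∃ j, 0 < g j := by
      obtain ⟨g, hg, j, hj⟩ := Fintype.not_linearIndependent_iff.mp hw
      rcases hj.lt_or_gt with hj | hj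
      · exact ⟨-g, by simp [neg_smul, hg], j, by simpa using hj⟩
      · exact ⟨g, hg, j, hj⟩
    -- move `τ` along `-g` until its first coordinate vanishes
    obtain ⟨k, hk, hmin⟩ := (Finset.univ.filter (0 < g ·)).exists_min_image (fun j ↦ τ j / g j)
      (by simpa [Finset.Nonempty] using hpos)
    rw [Finset.mem_filter] at hk
    set θ := τ k / g k
    have hθ : 0 ≤ θ := div_nonneg (hτ k) hk.2.le
    have hτ' : ∀ j, 0 ≤ τ j - θ * g j := by
      intro j
      rcases le_or_gt (g j) 0 with hj | hj
      · nlinarith [show 0 ≤ τ j from hτ j, mul_nonpos_of_nonneg_of_nonpos hθ hj]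
      · have := hmin j (by simp [hj])
        rw [le_div_iff₀ hj] at this
        linarith
    have hk0 : τ k - θ * g k = 0 := by simp [θ, div_mul_cancel₀ _ hk.2.ne']
    refine mem_iUnion.mpr ⟨k, fun j ↦ τ j - θ * g j, fun j ↦ hτ' j, ?_⟩
    have hsum : ∑ j, (τ j - θ * g j) • w j = ∑ j, τ j • w j := by
      simp [sub_smul, Finset.sum_sub_distrib, mul_smul, ← Finset.smul_sum, hg]
    simp only [Fintype.linearCombination_apply, ← hsum,
      Fintype.sum_eq_add_sum_subtype_ne (fun j ↦ (τ j - θ * g j) • w j) k, hk0, zero_smul,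
      zero_add]
  · rintro _ ⟨σ, hσ, rfl⟩
    refine ⟨fun j ↦ if h : j = k then 0 else σ ⟨j, h⟩, fun j ↦ ?_, ?_⟩
    · dsimp only; split_ifs; exacts [le_rfl, hσ _]
    · simp only [Fintype.linearCombination_apply, Fintype.sum_eq_add_sum_subtype_ne _ k,
        dif_pos, zero_smul, zero_add]
      exact Finset.sum_congr rfl fun j _ ↦ by rw [dif_neg j.2]

end ConicalCombinations

theorem isClosed_linearCombination_image_Ici {E : Type*} [NormedAddCommGroup E]
    [NormedSpace ℝ E] [FiniteDimensional ℝ E] {κ : Type*} [Fintype κ] (w : κ → E) :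
    IsClosed (Fintype.linearCombination ℝ w '' Ici 0) := by
  classical
  induction h : Fintype.card κ using Nat.strong_induction_on generalizing κ with
  | _ n ih =>
  by_cases hw : LinearIndependent ℝ w
  · refine (LinearMap.isClosedEmbedding_of_injective ?_).isClosedMap _ isClosed_Ici
    exact LinearMap.ker_eq_bot.mpr hw.fintypeLinearCombination_injective
  · rw [linearCombination_image_Ici_eq_iUnion hw]
    exact isClosed_iUnion_of_finite fun k ↦
      ih _ (h ▸ Fintype.card_subtype_lt (p := (· ≠ k)) (not_not.mpr rfl)) _ rfl

theorem exists_nonneg_sum_smul_eq_of_dotProduct_nonpos {ι κ : Type*} [Fintype ι] [Fintype κ]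
    {w : κ → ι → ℝ} {c : ι → ℝ} (h : ∀ d : ι → ℝ, (∀ k, w k ⬝ᵥ d ≤ 0) → c ⬝ᵥ d ≤ 0) :
    ∃ τ : κ → ℝ, 0 ≤ τ ∧ ∑ k, τ k • w k = c := by
  classical
  let C : ProperCone ℝ (ι → ℝ) :=
    { toSubmodule := (PointedCone.positive ℝ (κ → ℝ)).map (Fintype.linearCombination ℝ w)
      isClosed' := isClosed_linearCombination_image_Ici w }
  have hC : ∀ x, x ∈ C ↔ ∃ τ : κ → ℝ, 0 ≤ τ ∧ ∑ k, τ k • w k = x := fun x ↦ by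
    change x ∈ PointedCone.map _ _ ↔ _
    simp [PointedCone.mem_map, Fintype.linearCombination_apply]
  by_contra hc
  obtain ⟨f, hfC, hfc⟩ := C.hyperplane_separation_point (x₀ := c) (by rwa [hC])
  have hf : ∀ x, x ⬝ᵥ (fun i ↦ f (Pi.single i 1)) = f x := fun x ↦
    (LinearMap.apply_eq_dotProduct_apply_single f.toLinearMap x).symm
  have hw : ∀ k, w k ∈ C := fun k ↦
    (hC _).mpr ⟨Pi.single k 1, Pi.single_nonneg.mpr zero_le_one, by simp [Pi.single_apply]⟩
  have := h _ fun k ↦ by rw [dotProduct_neg, hf]; linarith [hfC _ (hw k)]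
  rw [dotProduct_neg, hf] at this
  linarith

section BoxConstrainedLP

variable {I T : Type*}

def primalPolytope [Fintype I] (a : I → T → ℝ) (u : I → ℝ) : Set (I → ℝ) :=
  {δ | (∀ t, ∑ i, a i t * δ i = 0) ∧ ∀ i, 0 ≤ δ i ∧ δ i ≤ u i}

/-- The feasible set of the dual `min {u ⬝ γ | ...}` of `max {c ⬝ δ | δ ∈ primalPolytope a u}`,
in the variables `y = (π, γ, λ)`. -/
def dualPolyhedron [Fintype T] (a : I → T → ℝ) (c : I → ℝ) :
    Set ((T → ℝ) × (I → ℝ) × (I → ℝ)) :=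
  {y | (∀ i, (∑ t, a i t * y.1 t) + y.2.1 i - y.2.2 i = c i) ∧
    (∀ i, 0 ≤ y.2.1 i) ∧ ∀ i, 0 ≤ y.2.2 i}

variable {a : I → T → ℝ} {u c δ : I → ℝ}

theorem sum_mul_nonpos_of_isMaxOn [Fintype I] (hδ : δ ∈ primalPolytope a u)
    (hopt : ∀ δ' ∈ primalPolytope a u, ∑ i, c i * δ' i ≤ ∑ i, c i * δ i) {d : I → ℝ}
    (hd : ∀ t, ∑ i, a i t * d i = 0) (hd₀ : ∀ i, δ i = 0 → 0 ≤ d i)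
    (hdu : ∀ i, δ i = u i → d i ≤ 0) : ∑ i, c i * d i ≤ 0 := by
  have hup : ∀ i, 0 < u i - δ i ∨ (d i ≤ 0 ∧ 0 ≤ u i - δ i) := fun i ↦ by
    rcases (hδ.2 i).2.lt_or_eq with h | h
    · exact .inl (sub_pos.mpr h)
    · exact .inr ⟨hdu i h, by rw [h, sub_self]⟩
  have hlow : ∀ i, 0 < δ i ∨ (-d i ≤ 0 ∧ 0 ≤ δ i) := fun i ↦ by
    rcases (hδ.2 i).1.lt_or_eq with h | h
    · exact .inl h
    · exact .inr ⟨neg_nonpos.mpr (hd₀ i h.symm), h.le⟩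
  obtain ⟨ε, hε, hεu, hεl⟩ := (eventually_mem_nhdsWithin.and
    ((eventually_forall_mul_le hup).and (eventually_forall_mul_le hlow))).exists
  have hmem : δ + ε • d ∈ primalPolytope a u := by
    refine ⟨fun t ↦ ?_, fun i ↦ ?_⟩
    · simp [mul_add, Finset.sum_add_distrib, hδ.1 t, mul_left_comm _ ε, ← Finset.mul_sum, hd t]
    · have := hεu i; have := hεl i
      simp only [Pi.add_apply, Pi.smul_apply, smul_eq_mul]
      constructor <;> linarith
  have := hopt _ hmem
  simp only [Pi.add_apply, Pi.smul_apply, smul_eq_mul, mul_add, Finset.sum_add_distrib,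
    mul_left_comm _ ε, ← Finset.mul_sum] at this
  exact nonpos_of_mul_nonpos_right (by linarith) hε

theorem add_smul_mem_dualPolyhedron [Fintype T] {y : (T → ℝ) × (I → ℝ) × (I → ℝ)}
    (hy : y ∈ dualPolyhedron a c) {d : T → ℝ} {g l : I → ℝ} (hdir : ∀ i, a i ⬝ᵥ d + g i - l i = 0)
    {s : ℝ} (hg : ∀ i, |s| * |g i| ≤ y.2.1 i) (hl : ∀ i, |s| * |l i| ≤ y.2.2 i) :
    y + s • (d, g, l) ∈ dualPolyhedron a c := by
  have hlow : ∀ z, -(|s| * |z|) ≤ s * z := fun z ↦ abs_mul s z ▸ neg_abs_le (s * z)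
  simp only [dualPolyhedron, mem_ofPred_eq, Prod.fst_add, Prod.snd_add, Prod.smul_fst,
    Prod.smul_snd, Pi.add_apply, Pi.smul_apply, smul_eq_mul]
  refine ⟨fun i ↦ ?_, fun i ↦ by linarith [hlow (g i), hg i],
    fun i ↦ by linarith [hlow (l i), hl i]⟩
  have hrow : ∑ t, a i t * (y.1 t + s * d t) = ∑ t, a i t * y.1 t + s * (a i ⬝ᵥ d) := by
    simp [dotProduct, mul_add, Finset.sum_add_distrib, Finset.mul_sum, mul_left_comm]
  linear_combination hrow + hy.1 i + s * hdir i

variable [Fintype I] [Fintype T]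

theorem dual_objective_sub_primal_objective {y : (T → ℝ) × (I → ℝ) × (I → ℝ)}
    (hδ : δ ∈ primalPolytope a u) (hy : y ∈ dualPolyhedron a c) :
    ∑ i, u i * y.2.1 i - ∑ i, c i * δ i = ∑ i, (y.2.1 i * (u i - δ i) + y.2.2 i * δ i) := by
  have hflow : ∑ i, (∑ t, a i t * y.1 t) * δ i = 0 := by
    simp_rw [Finset.sum_mul, mul_right_comm _ (y.1 _)]
    rw [Finset.sum_comm]
    simp [← Finset.sum_mul, hδ.1]
  rw [← Finset.sum_sub_distrib, ← sub_zero (∑ i, (_ + _)), ← hflow, ← Finset.sum_sub_distrib]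
  exact Finset.sum_congr rfl fun i _ ↦ by rw [← hy.1 i]; ring

theorem exists_mem_dualPolyhedron_le_of_isMaxOn (hδ : δ ∈ primalPolytope a u)
    (hopt : ∀ δ' ∈ primalPolytope a u, ∑ i, c i * δ' i ≤ ∑ i, c i * δ i) :
    ∃ y ∈ dualPolyhedron a c, ∑ i, u i * y.2.1 i ≤ ∑ i, c i * δ i := by
  classical
  let atLower : I → ℝ := fun i ↦ if δ i = 0 then 1 else 0
  let atUpper : I → ℝ := fun i ↦ if δ i = u i then 1 else 0
  -- the outer normals of the constraints active at `δ`
  let w : (T ⊕ T) ⊕ (I ⊕ I) → I → ℝ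
    | .inl (.inl t) => fun i ↦ a i t
    | .inl (.inr t) => fun i ↦ -a i t
    | .inr (.inl i) => Pi.single i (-atLower i)
    | .inr (.inr i) => Pi.single i (atUpper i)
  obtain ⟨τ, hτ, hτc⟩ := exists_nonneg_sum_smul_eq_of_dotProduct_nonpos (w := w) (c := c) <| by
    intro d hd
    refine sum_mul_nonpos_of_isMaxOn hδ hopt (fun t ↦ ?_) (fun i hi ↦ ?_) (fun i hi ↦ ?_)
    · have h₁ := hd (.inl (.inl t))
      have h₂ := hd (.inl (.inr t))
      simp only [w, dotProduct, neg_mul, Finset.sum_neg_distrib] at h₁ h₂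
      linarith
    · simpa [w, atLower, hi, single_dotProduct] using hd (.inr (.inl i))
    · simpa [w, atUpper, hi, single_dotProduct] using hd (.inr (.inr i))
  let y : (T → ℝ) × (I → ℝ) × (I → ℝ) :=
    (fun t ↦ τ (.inl (.inl t)) - τ (.inl (.inr t)),
      fun i ↦ τ (.inr (.inr i)) * atUpper i, fun i ↦ τ (.inr (.inl i)) * atLower i)
  have hy : y ∈ dualPolyhedron a c := by
    refine ⟨fun i ↦ ?_, fun i ↦ ?_, fun i ↦ ?_⟩
    · have := congrFun hτc i
      simp only [Finset.sum_apply, Pi.smul_apply, smul_eq_mul, Fintype.sum_sum_type, mul_neg,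
        Finset.sum_neg_distrib, Pi.single_apply, mul_ite, mul_zero, Finset.sum_ite_eq,
        Finset.mem_univ, ↓reduceIte, w] at this
      simp only [y, mul_comm (a i _), sub_mul, Finset.sum_sub_distrib]
      linarith
    · exact mul_nonneg (hτ _) (by simp only [atUpper]; split_ifs <;> norm_num)
    · exact mul_nonneg (hτ _) (by simp only [atLower]; split_ifs <;> norm_num)
  refine ⟨y, hy, sub_nonpos.mp ?_⟩
  rw [dual_objective_sub_primal_objective hδ hy]
  refine (Finset.sum_eq_zero fun i _ ↦ ?_).le
  have hu : atUpper i * (u i - δ i) = 0 := by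
    simp only [atUpper]; split_ifs with h <;> simp [h]
  have hl : atLower i * δ i = 0 := by
    simp only [atLower]; split_ifs with h <;> simp [h]
  linear_combination τ (.inr (.inr i)) * hu + τ (.inr (.inl i)) * hl

theorem complementary_slackness (hδ : δ ∈ primalPolytope a u)
    (hδopt : ∀ δ' ∈ primalPolytope a u, ∑ i, c i * δ' i ≤ ∑ i, c i * δ i)
    {y : (T → ℝ) × (I → ℝ) × (I → ℝ)} (hy : y ∈ dualPolyhedron a c)
    (hyopt : ∀ y' ∈ dualPolyhedron a c, ∑ i, u i * y.2.1 i ≤ ∑ i, u i * y'.2.1 i) (i : I) :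
    (0 < δ i → y.2.2 i = 0) ∧ (δ i < u i → y.2.1 i = 0) := by
  obtain ⟨y', hy', hle⟩ := exists_mem_dualPolyhedron_le_of_isMaxOn hδ hδopt
  have hterm : ∀ j, 0 ≤ y.2.1 j * (u j - δ j) ∧ 0 ≤ y.2.2 j * δ j := fun j ↦
    ⟨mul_nonneg (hy.2.1 j) (sub_nonneg.mpr (hδ.2 j).2), mul_nonneg (hy.2.2 j) (hδ.2 j).1⟩
  have hgap : ∑ j, (y.2.1 j * (u j - δ j) + y.2.2 j * δ j) = 0 := by
    refine le_antisymm ?_ (Finset.sum_nonneg fun j _ ↦ add_nonneg (hterm j).1 (hterm j).2)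
    linarith [dual_objective_sub_primal_objective hδ hy, hyopt y' hy']
  obtain ⟨hγ, hl⟩ := (add_eq_zero_iff_of_nonneg (hterm i).1 (hterm i).2).mp <|
    (Finset.sum_eq_zero_iff_of_nonneg fun j _ ↦ add_nonneg (hterm j).1 (hterm j).2).mp hgap i
      (Finset.mem_univ i)
  exact ⟨fun h ↦ (mul_eq_zero.mp hl).resolve_right h.ne',
    fun h ↦ (mul_eq_zero.mp hγ).resolve_right (sub_pos.mpr h).ne'⟩

theorem span_tight_eq_top_of_mem_extremePoints {y : (T → ℝ) × (I → ℝ) × (I → ℝ)}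
    (hy : y ∈ (dualPolyhedron a c).extremePoints ℝ) :
    Submodule.span ℝ (range fun i : {i // y.2.1 i = 0 ∧ y.2.2 i = 0} ↦ a i) = ⊤ := by
  classical
  obtain ⟨⟨-, hγ, hlam⟩, -⟩ := id hy
  by_contra hne
  obtain ⟨f, hf0, hf⟩ := Submodule.exists_le_ker_of_lt_top _ (lt_top_iff_ne_top.mpr hne)
  set d : T → ℝ := fun t ↦ f (Pi.single t 1)
  let r : I → ℝ := fun i ↦ a i ⬝ᵥ d
  have hr : ∀ i, y.2.1 i = 0 → y.2.2 i = 0 → r i = 0 := fun i h₁ h₂ ↦ by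
    simp only [r, d, ← LinearMap.apply_eq_dotProduct_apply_single]
    exact hf (Submodule.subset_span ⟨⟨i, h₁, h₂⟩, rfl⟩)
  -- move `π` along `d`, absorbing the change of each row in a strictly positive slack
  let g : I → ℝ := fun i ↦ if y.2.1 i = 0 then 0 else -r i
  let l : I → ℝ := fun i ↦ if y.2.1 i = 0 then r i else 0
  have hg : ∀ i, 0 < y.2.1 i ∨ (|g i| ≤ 0 ∧ 0 ≤ y.2.1 i) := fun i ↦ by
    by_cases h : y.2.1 i = 0
    · simp [g, h]
    · exact .inl ((hγ i).lt_of_ne' h)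
  have hl : ∀ i, 0 < y.2.2 i ∨ (|l i| ≤ 0 ∧ 0 ≤ y.2.2 i) := fun i ↦ by
    by_cases h : y.2.1 i = 0
    · rcases (hlam i).lt_or_eq with h' | h'
      · exact .inl h'
      · simp [l, h, hr i h h'.symm, ← h']
    · simp [l, h, hlam i]
  obtain ⟨ε, hε, hεg, hεl⟩ := (eventually_mem_nhdsWithin.and
    ((eventually_forall_mul_le hg).and (eventually_forall_mul_le hl))).exists
  have hdir : ∀ i, a i ⬝ᵥ d + g i - l i = 0 := fun i ↦ by simp only [g, l]; split_ifs <;> ring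
  have hmem : ∀ s : ℝ, |s| = ε → y + s • (d, g, l) ∈ dualPolyhedron a c := fun s hs ↦
    add_smul_mem_dualPolyhedron hy.1 hdir (fun i ↦ hs ▸ hεg i) (fun i ↦ hs ▸ hεl i)
  have hzero : ε • (d, g, l) = 0 :=
    eq_zero_of_mem_extremePoints_of_add_mem_of_sub_mem hy (hmem ε (abs_of_pos hε))
      (by simpa [sub_eq_add_neg] using hmem (-ε) (by rw [abs_neg, abs_of_pos hε]))
  have hd : d = 0 := congrArg Prod.fst ((smul_eq_zero.mp hzero).resolve_left hε.ne')
  exact hf0 (LinearMap.ext fun x ↦ by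
    rw [LinearMap.apply_eq_dotProduct_apply_single f x]
    exact (congrArg (x ⬝ᵥ ·) hd).trans (dotProduct_zero x))

end BoxConstrainedLP

theorem IsTotallyUnimodularMat.isTotallyUnimodular {m n : Type*} [Fintype m] [Fintype n]
    {A : Matrix m n ℤ} (hA : IsTotallyUnimodularMat A) : A.IsTotallyUnimodular :=
  fun k f g hf hg ↦ by
    rcases hA k f g hf hg with h | h | h <;> rw [h]
    exacts [⟨0, rfl⟩, ⟨1, rfl⟩, ⟨-1, rfl⟩]

namespace Matrix.IsTotallyUnimodular

variable {m n : Type*} {M : Matrix m n ℤ}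

theorem abs_det_submatrix_le_one (hM : M.IsTotallyUnimodular) {ι : Type*} [Fintype ι]
    [DecidableEq ι] (f : ι → m) (g : ι → n) : |(M.submatrix f g).det| ≤ 1 := by
  obtain ⟨σ, hσ⟩ := (isTotallyUnimodular_iff_fintype M).mp hM ι f g
  rw [← hσ]
  cases σ <;> simp

/-- By Cramer's rule, each entry of `B⁻¹ M` is a ratio of two square minors of `M`. -/
theorem abs_inv_submatrix_mul_apply_le_one [Fintype m] [DecidableEq m]
    (hM : M.IsTotallyUnimodular) (b : m → n) (s : m) (j : n) :
    |((M.submatrix id b)⁻¹ * M) s j| ≤ 1 := by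
  have hcol : (M.submatrix id b).updateCol s (fun t ↦ M t j) = M.submatrix id (update b s j) := by
    ext t r
    rcases eq_or_ne r s with rfl | hr <;> simp [*]
  have hentry : ((M.submatrix id b)⁻¹ * M) s j =
      Ring.inverse (M.submatrix id b).det * (M.submatrix id (update b s j)).det := by
    rw [inv_def, smul_mul, smul_apply, smul_eq_mul, ← hcol, ← cramer_apply,
      cramer_eq_adjugate_mulVec]
    rfl
  have hinv : |Ring.inverse (M.submatrix id b).det| ≤ 1 := by
    rcases Int.abs_le_one_iff.mp (hM.abs_det_submatrix_le_one id b) with h | h | h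
    · simp [h]
    · simp [h]
    · rw [h, show (-1 : ℤ) = ((-1 : ℤˣ) : ℤ) by simp, Ring.inverse_unit]; simp
  rw [hentry, abs_mul]
  exact mul_le_one₀ hinv (abs_nonneg _) (hM.abs_det_submatrix_le_one id _)

theorem isUnit_det_submatrix_of_linearIndependent [Fintype m] [DecidableEq m]
    (hM : M.IsTotallyUnimodular) {b : m → n} (hb : LinearIndependent ℝ fun s t ↦ (M t (b s) : ℝ)) :
    IsUnit (M.submatrix id b).det := by
  have hunit : IsUnit ((M.submatrix id b).map (Int.cast : ℤ → ℝ)) :=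
    linearIndependent_cols_iff_isUnit.mp hb
  have hdet : (M.submatrix id b).det ≠ 0 := by
    have := (isUnit_iff_isUnit_det _).mp hunit
    rw [← Int.cast_det] at this
    exact_mod_cast this.ne_zero
  rcases Int.abs_le_one_iff.mp (hM.abs_det_submatrix_le_one id b) with h | h | h
  exacts [absurd h hdet, h ▸ isUnit_one, h ▸ isUnit_one.neg]

end Matrix.IsTotallyUnimodular

theorem exists_linearIndependent_comp_of_span_eq_top {ι K T : Type*} [Field K] [Fintype T]
    {v : ι → T → K} (hv : Submodule.span K (range v) = ⊤) :
    ∃ b : T → ι, LinearIndependent K (v ∘ b) := by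
  obtain ⟨κ, a, -, hspan, hli⟩ := exists_linearIndependent' K v
  let e := (Module.Basis.mk hli (by rw [hspan, hv])).indexEquiv (Pi.basisFun K T)
  exact ⟨a ∘ e.symm, hli.comp _ e.symm.injective⟩

theorem exists_int_decomposition {I T : Type*} [Fintype T] [DecidableEq T] {A : Matrix T I ℤ}
    (hA : A.IsTotallyUnimodular) {b : T → I}
    (hb : IsUnit (A.submatrix id b).det) (v : I → ℤ) {G : ℝ} {π : T → ℝ}
    (hπ : ∀ s, ∑ t, (A t (b s) : ℝ) * π t = 1 + G * v (b s)) :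
    ∃ m w : T → ℤ, (∀ t, π t = m t + G * w t) ∧ (∀ t, |m t| ≤ Fintype.card T) ∧
      ∀ i, |(m ᵥ* A) i| ≤ Fintype.card T := by
  set B := A.submatrix id b
  set U := B⁻¹
  set M := fromCols A (1 : Matrix T T ℤ)
  have hbound : ∀ j, |((1 ᵥ* U) ᵥ* M) j| ≤ Fintype.card T := by
    intro j
    have hB : M.submatrix id (Sum.inl ∘ b) = B := by ext; simp [M, B]
    rw [vecMul_vecMul, show U = (M.submatrix id (Sum.inl ∘ b))⁻¹ by rw [hB]]
    calc |(1 ᵥ* ((M.submatrix id (Sum.inl ∘ b))⁻¹ * M)) j|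
        ≤ ∑ s, |((M.submatrix id (Sum.inl ∘ b))⁻¹ * M) s j| := by
          simpa [vecMul, dotProduct] using Finset.abs_sum_le_sum_abs _ _
      _ ≤ ∑ _s : T, 1 := Finset.sum_le_sum fun s _ ↦
          (hA.fromCols_one).abs_inv_submatrix_mul_apply_le_one _ s j
      _ = Fintype.card T := by simp
  refine ⟨1 ᵥ* U, (v ∘ b) ᵥ* U, ?_, fun t ↦ by simpa [M, vecMul_fromCols] using hbound (.inr t),
    fun i ↦ by simpa [M, vecMul_fromCols] using hbound (.inl i)⟩
  have hBU : B.map (Int.castRingHom ℝ) * U.map (Int.castRingHom ℝ) = 1 := by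
    rw [← Matrix.map_mul, mul_nonsing_inv _ hb, Matrix.map_one _ (map_zero _) (map_one _)]
  have hπB : π ᵥ* B.map (Int.castRingHom ℝ) = fun s ↦ 1 + G * v (b s) := funext fun s ↦ by
    rw [← hπ s]; simp [vecMul, dotProduct, B, mul_comm]
  have hπU : π = (fun s ↦ 1 + G * v (b s)) ᵥ* U.map (Int.castRingHom ℝ) := by
    rw [← hπB, vecMul_vecMul, hBU, vecMul_one]
  intro t
  rw [hπU]
  simp [vecMul, dotProduct, add_mul, Finset.sum_add_distrib, Finset.mul_sum, mul_assoc]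

theorem floor_div_add_half_eq {m w : ℤ} {G : ℝ} (h : 2 * |(m : ℝ)| < G) :
    ⌊((m : ℝ) + G * w) / G + 1 / 2⌋ = w := by
  have hG : 0 < G := by linarith [abs_nonneg (m : ℝ)]
  have h₁ : (m : ℝ) / G < 1 / 2 := by rw [div_lt_iff₀ hG]; linarith [le_abs_self (m : ℝ)]
  have h₂ : -(1 / 2) ≤ (m : ℝ) / G := by rw [le_div_iff₀ hG]; linarith [neg_abs_le (m : ℝ)]
  rw [Int.floor_eq_iff, add_div, mul_div_cancel_left₀ _ hG.ne']
  constructor <;> linarith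

theorem Int.le_of_mul_le_add_mul {x y : ℤ} {G r : ℝ} (hG : 0 ≤ G) (hr : r < G)
    (h : G * x ≤ r + G * y) : x ≤ y := by
  by_contra! hxy
  have : (y : ℝ) + 1 ≤ x := by exact_mod_cast hxy
  nlinarith

theorem price_conditions_of_decomposition {T : Type*} [Fintype T] [Nonempty T] {G : ℝ}
    (hG : 2 * (Fintype.card T : ℝ) < G) {q p m w : T → ℤ} {π : T → ℝ}
    (hπ : ∀ t, π t = m t + G * w t) (hm : |∑ t, m t * q t| ≤ Fintype.card T) :
    (∑ t, (q t : ℝ) * π t ≤ 1 + G * ∑ t, (p t : ℝ) * q t →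
      0 ≤ ∑ t, ((p t : ℝ) - w t) * q t) ∧
    (1 + G * ∑ t, (p t : ℝ) * q t ≤ ∑ t, (q t : ℝ) * π t →
      ∑ t, ((p t : ℝ) - w t) * q t ≤ 0) := by
  have hT : (1 : ℝ) ≤ Fintype.card T := by exact_mod_cast Fintype.card_pos
  have hm' : |((∑ t, m t * q t : ℤ) : ℝ)| ≤ Fintype.card T := by exact_mod_cast hm
  obtain ⟨hm₁, hm₂⟩ := abs_le.mp hm'
  have hqπ : ∑ t, (q t : ℝ) * π t =
      ((∑ t, m t * q t : ℤ) : ℝ) + G * ((∑ t, w t * q t : ℤ) : ℝ) := by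
    simp only [hπ, Int.cast_sum, Int.cast_mul, mul_add, Finset.sum_add_distrib, Finset.mul_sum]
    congr 1 <;> exact Finset.sum_congr rfl fun t _ ↦ by ring
  have hprice : ∑ t, ((p t : ℝ) - w t) * q t =
      ((∑ t, p t * q t : ℤ) : ℝ) - ((∑ t, w t * q t : ℤ) : ℝ) := by
    push_cast; simp [sub_mul, Finset.sum_sub_distrib]
  have hpq : ∑ t, (p t : ℝ) * q t = ((∑ t, p t * q t : ℤ) : ℝ) := by push_cast; rfl
  rw [hqπ, hprice, hpq, sub_nonneg, sub_nonpos]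
  refine ⟨fun h ↦ ?_, fun h ↦ ?_⟩
  · exact_mod_cast Int.le_of_mul_le_add_mul (r := 1 - (∑ t, m t * q t : ℤ)) (by linarith)
      (by linarith) (by linarith : G * (∑ t, w t * q t : ℤ) ≤ _ + G * (∑ t, p t * q t : ℤ))
  · exact_mod_cast Int.le_of_mul_le_add_mul (r := (∑ t, m t * q t : ℤ) - 1) (by linarith)
      (by linarith) (by linarith : G * (∑ t, p t * q t : ℤ) ≤ _ + G * (∑ t, w t * q t : ℤ))

theorem rounded_dual_prices_satisfy_price_conditions_general
    {I T : Type*} [Fintype I] [Fintype T]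
    (Q p : I → T → ℤ) (δbar : I → ℕ)
    (hTU : IsTotallyUnimodularMat (Matrix.of fun (t : T) (i : I) => Q i t))
    (G : ℝ) (hG : 2 * (Fintype.card T : ℝ) < G)
    (δstar : I → ℝ)
    (hδ_ep : δstar ∈ Set.extremePoints ℝ
        {δ : I → ℝ | (∀ t, ∑ i, (Q i t : ℝ) * δ i = 0) ∧
          ∀ i, 0 ≤ δ i ∧ δ i ≤ (δbar i : ℝ)})
    (hδ_opt : ∀ δ : I → ℝ,
        (∀ t, ∑ i, (Q i t : ℝ) * δ i = 0) →
        (∀ i, 0 ≤ δ i ∧ δ i ≤ (δbar i : ℝ)) →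
        ∑ i, (1 + G * ∑ t, (p i t : ℝ) * (Q i t : ℝ)) * δ i
          ≤ ∑ i, (1 + G * ∑ t, (p i t : ℝ) * (Q i t : ℝ)) * δstar i)
    (ystar : (T → ℝ) × (I → ℝ) × (I → ℝ))
    (hy_ep : ystar ∈ Set.extremePoints ℝ
        {y : (T → ℝ) × (I → ℝ) × (I → ℝ) |
          (∀ i, (∑ t, (Q i t : ℝ) * y.1 t) + y.2.1 i - y.2.2 i
            = 1 + G * ∑ t, (p i t : ℝ) * (Q i t : ℝ)) ∧
          (∀ i, 0 ≤ y.2.1 i) ∧ (∀ i, 0 ≤ y.2.2 i)})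
    (hy_opt : ∀ y : (T → ℝ) × (I → ℝ) × (I → ℝ),
        (∀ i, (∑ t, (Q i t : ℝ) * y.1 t) + y.2.1 i - y.2.2 i
          = 1 + G * ∑ t, (p i t : ℝ) * (Q i t : ℝ)) →
        (∀ i, 0 ≤ y.2.1 i) → (∀ i, 0 ≤ y.2.2 i) →
        ∑ i, (δbar i : ℝ) * ystar.2.1 i ≤ ∑ i, (δbar i : ℝ) * y.2.1 i) :
    ∀ i : I,
      (0 < δstar i →
        0 ≤ ∑ t, ((p i t : ℝ) - ((⌊ystar.1 t / G + 1 / 2⌋ : ℤ) : ℝ)) * (Q i t : ℝ)) ∧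
      (δstar i < (δbar i : ℝ) →
        ∑ t, ((p i t : ℝ) - ((⌊ystar.1 t / G + 1 / 2⌋ : ℤ) : ℝ)) * (Q i t : ℝ) ≤ 0) := by
  classical
  intro i
  rcases isEmpty_or_nonempty T with hT | hT
  · simp
  have hA := hTU.isTotallyUnimodular
  obtain ⟨hlower, hupper⟩ := complementary_slackness hδ_ep.1 (fun δ hδ ↦ hδ_opt δ hδ.1 hδ.2)
    hy_ep.1 (fun y hy ↦ hy_opt y hy.1 hy.2.1 hy.2.2) i
  obtain ⟨b, hb⟩ := exists_linearIndependent_comp_of_span_eq_top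
    (span_tight_eq_top_of_mem_extremePoints hy_ep)
  obtain ⟨m, w, hπ, hm, hmA⟩ := exists_int_decomposition hA
    (hA.isUnit_det_submatrix_of_linearIndependent (b := Subtype.val ∘ b) hb)
    (fun i ↦ ∑ t, p i t * Q i t) (π := ystar.1) fun s ↦ by
      simpa [(b s).2.1, (b s).2.2] using hy_ep.1.1 (b s)
  have hround : ∀ t, ⌊ystar.1 t / G + 1 / 2⌋ = w t := fun t ↦ by
    rw [hπ t]
    have : |(m t : ℝ)| ≤ Fintype.card T := by exact_mod_cast hm t
    exact floor_div_add_half_eq (by linarith)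
  simp only [hround]
  obtain ⟨hle, hge⟩ := price_conditions_of_decomposition hG (q := fun t ↦ Q i t) (p := p i) hπ
    (hmA i)
  obtain ⟨hdual, hγ, hlam⟩ := hy_ep.1
  exact ⟨fun h ↦ hle (by linarith [hdual i, hγ i, hlower h]),
    fun h ↦ hge (by linarith [hdual i, hupper h, hlam i])⟩

/-- For the weighted linear program with scaling factor `G > 2·|T|` over a
totally unimodular clearing matrix of full rank `|T|`, a primal optimal extreme point `δ*`
together with the prices `π̄ t = ⌊π* t / G + 1/2⌋` rounded from a dual optimal extreme
point `(π*, γ*, λ*)` satisfies the price conditions. -/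
theorem rounded_dual_prices_satisfy_price_conditions
    {I T : Type*} [Fintype I] [Fintype T]
    (Q p : I → T → ℤ) (δbar : I → ℕ)
    (hTU : IsTotallyUnimodularMat (Matrix.of fun (t : T) (i : I) => Q i t))
    (hrank : (Matrix.of fun (t : T) (i : I) => (Q i t : ℝ)).rank = Fintype.card T)
    (G : ℝ) (hG : 2 * (Fintype.card T : ℝ) < G)
    (δstar : I → ℝ)
    (hδ_ep : δstar ∈ Set.extremePoints ℝ
        {δ : I → ℝ | (∀ t, ∑ i, (Q i t : ℝ) * δ i = 0) ∧
          ∀ i, 0 ≤ δ i ∧ δ i ≤ (δbar i : ℝ)})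
    (hδ_opt : ∀ δ : I → ℝ,
        (∀ t, ∑ i, (Q i t : ℝ) * δ i = 0) →
        (∀ i, 0 ≤ δ i ∧ δ i ≤ (δbar i : ℝ)) →
        ∑ i, (1 + G * ∑ t, (p i t : ℝ) * (Q i t : ℝ)) * δ i
          ≤ ∑ i, (1 + G * ∑ t, (p i t : ℝ) * (Q i t : ℝ)) * δstar i)
    (ystar : (T → ℝ) × (I → ℝ) × (I → ℝ))
    (hy_ep : ystar ∈ Set.extremePoints ℝ
        {y : (T → ℝ) × (I → ℝ) × (I → ℝ) |
          (∀ i, (∑ t, (Q i t : ℝ) * y.1 t) + y.2.1 i - y.2.2 i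
            = 1 + G * ∑ t, (p i t : ℝ) * (Q i t : ℝ)) ∧
          (∀ i, 0 ≤ y.2.1 i) ∧ (∀ i, 0 ≤ y.2.2 i)})
    (hy_opt : ∀ y : (T → ℝ) × (I → ℝ) × (I → ℝ),
        (∀ i, (∑ t, (Q i t : ℝ) * y.1 t) + y.2.1 i - y.2.2 i
          = 1 + G * ∑ t, (p i t : ℝ) * (Q i t : ℝ)) →
        (∀ i, 0 ≤ y.2.1 i) → (∀ i, 0 ≤ y.2.2 i) →
        ∑ i, (δbar i : ℝ) * ystar.2.1 i ≤ ∑ i, (δbar i : ℝ) * y.2.1 i) :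
    ∀ i : I,
      (0 < δstar i →
        0 ≤ ∑ t, ((p i t : ℝ) - ((⌊ystar.1 t / G + 1 / 2⌋ : ℤ) : ℝ)) * (Q i t : ℝ)) ∧
      (δstar i < (δbar i : ℝ) →
        ∑ t, ((p i t : ℝ) - ((⌊ystar.1 t / G + 1 / 2⌋ : ℤ) : ℝ)) * (Q i t : ℝ) ≤ 0) :=
  rounded_dual_prices_satisfy_price_conditions_general Q p δbar hTU G hG δstar hδ_ep hδ_opt ystar
    hy_ep hy_opt
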